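/- arXiv:2006.00758 — 3 statements merged into one kernel-verified Lean document; each statement's English description precedes it below -/
import Mathlib

section
/- Let τ, β be real numbers with 0 < τ < β, and let r > 0. Then the cubic polynomial τλ³ + λ² + βr²λ + r² (in the complex variable λ) has no purely imaginary root, i.e., there is no d ∈ ℝ \ {0} with τ(id)³ + (id)² + βr²(id) + r² = 0. -/
theorem mgt_no_purely_imaginary_root
    (τ β r : ℝ) (hτ : 0 < τ) (hτβ : τ < β) (hr : 0 < r) :
    ¬ ∃ d : ℝ, d ≠ 0 ∧
      (τ : ℂ) * ((d : ℂ) * Complex.I) ^ 3 + ((d : ℂ) * Complex.I) ^ 2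
        + (β : ℂ) * (r : ℂ) ^ 2 * ((d : ℂ) * Complex.I) + (r : ℂ) ^ 2 = 0 := by
  rintro ⟨d, hd, heq⟩
  rw [Complex.ext_iff] at heq
  obtain ⟨h1, h2⟩ := heq
  simp [Complex.add_im, Complex.add_re, Complex.mul_re, Complex.mul_im, pow_succ] at h1 h2
  -- h1 : real part, h2 : imaginary part
  have hre : r ^ 2 - d ^ 2 = 0 := by nlinarith [h1]
  have him : d * (β * r ^ 2 - τ * d ^ 2) = 0 := by nlinarith [h2]
  have hd2 : d ^ 2 = r ^ 2 := by nlinarith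
  have : β * r ^ 2 - τ * d ^ 2 = 0 := by
    rcases mul_eq_zero.mp him with h | h
    · exact absurd h hd
    · exact h
  nlinarith [mul_pos hr hr]
end

section
/- Let n ≥ 3 and c > 0. There exist constants C₁, C₂ > 0 such that for all t ≥ 1: C₁ t^{−(n−2)/4} ≤ (∫₀^∞ r^{n−3}·sin²(rt)·e^{−2c r² t} dr)^{1/2} ≤ C₂ t^{−(n−2)/4}. -/
open MeasureTheory Set Real

lemma profCont (p t c : ℝ) (hp : 0 ≤ p) :
    Continuous fun r : ℝ => r ^ p * Real.sin (r * t) ^ 2 * Real.exp (-2 * c * r ^ 2 * t) :=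
  ((Real.continuous_rpow_const hp).mul
    ((Real.continuous_sin.comp (continuous_id.mul continuous_const)).pow 2)).mul
    (Real.continuous_exp.comp (by continuity))

lemma profInt (p c t : ℝ) (hp : 0 ≤ p) (hc : 0 < c) (ht : 0 < t) :
    IntegrableOn (fun r : ℝ => r ^ p * Real.sin (r * t) ^ 2 * Real.exp (-2 * c * r ^ 2 * t))
      (Ioi 0) := by
  have hdom : IntegrableOn (fun r : ℝ => r ^ p * Real.exp (-(2 * c * t) * r ^ 2)) (Ioi 0) :=
    integrableOn_rpow_mul_exp_neg_mul_sq (by positivity) (by linarith)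
  refine hdom.mono' ((profCont p t c hp).aestronglyMeasurable.restrict) ?_
  rw [ae_restrict_iff' measurableSet_Ioi]
  refine ae_of_all _ fun x hx => ?_
  have hx0 : (0:ℝ) < x := hx
  have h1 : (0:ℝ) ≤ x ^ p := Real.rpow_nonneg hx0.le p
  have h2 : Real.sin (x * t) ^ 2 ≤ 1 := by nlinarith [Real.neg_one_le_sin (x*t), Real.sin_le_one (x*t)]
  have h3 : Real.exp (-2 * c * x ^ 2 * t) = Real.exp (-(2 * c * t) * x ^ 2) := by ring_nf
  rw [Real.norm_eq_abs, abs_of_nonneg (by positivity), h3]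
  have h4 : (0:ℝ) < Real.exp (-(2 * c * t) * x ^ 2) := Real.exp_pos _
  nlinarith [mul_nonneg (mul_nonneg h1 h4.le) (sub_nonneg.mpr h2)]

lemma gauss_scaling (p c t : ℝ) (hp : 0 ≤ p) (hc : 0 < c) (ht : 0 < t) :
    (∫ r in Ioi (0:ℝ), r ^ p * Real.exp (-(2*c*t) * r ^ 2))
      = (∫ x in Ioi (0:ℝ), x ^ p * Real.exp (-(2*c) * x ^ 2)) * t ^ (-(p+1)/2) := by
  set s := t ^ ((1:ℝ)/2) with hs
  have hs0 : 0 < s := Real.rpow_pos_of_pos ht _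
  have hsp : 0 < s ^ p := Real.rpow_pos_of_pos hs0 _
  have hss : s * s = t := by rw [hs, ← Real.rpow_add ht]; norm_num
  have key := integral_comp_mul_left_Ioi (fun x => x ^ p * Real.exp (-(2*c) * x ^ 2)) 0 hs0
  simp only [mul_zero, smul_eq_mul] at key
  have lhs_eq : (∫ r in Ioi (0:ℝ), (s * r) ^ p * Real.exp (-(2*c) * (s * r) ^ 2))
      = s ^ p * ∫ r in Ioi (0:ℝ), r ^ p * Real.exp (-(2*c*t) * r ^ 2) := by
    rw [← integral_const_mul]
    refine setIntegral_congr_fun measurableSet_Ioi fun r hr => ?_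
    have hr0 : (0:ℝ) < r := hr
    rw [Real.mul_rpow hs0.le hr0.le]
    have h2 : (s * r) ^ 2 = t * r ^ 2 := by rw [mul_pow, ← hss]; ring
    rw [h2]; ring_nf
  rw [lhs_eq] at key
  have hexp : t ^ (-(p+1)/2) = (s ^ p * s)⁻¹ := by
    have h1 : -(p+1)/2 = (1/2) * (-(p+1)) := by ring
    rw [h1, Real.rpow_mul ht.le, ← hs, Real.rpow_neg hs0.le, Real.rpow_add hs0, Real.rpow_one]
  rw [hexp]
  have halg : ∀ D G : ℝ, s ^ p * D = s⁻¹ * G → D = G * (s ^ p * s)⁻¹ := by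
    intro D G h
    field_simp at h ⊢
    linarith [h]
  exact halg _ _ key

lemma profUpper (p c t : ℝ) (hp : 0 ≤ p) (hc : 0 < c) (ht : 0 < t) :
    (∫ r in Ioi (0:ℝ), r ^ p * Real.sin (r * t) ^ 2 * Real.exp (-2 * c * r ^ 2 * t))
      ≤ (∫ x in Ioi (0:ℝ), x ^ p * Real.exp (-(2*c) * x ^ 2)) * t ^ (-(p+1)/2) := by
  rw [← gauss_scaling p c t hp hc ht]
  refine setIntegral_mono_on (profInt p c t hp hc ht)
    (integrableOn_rpow_mul_exp_neg_mul_sq (by positivity) (by linarith)) measurableSet_Ioi ?_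
  intro x hx
  have hx0 : (0:ℝ) < x := hx
  have h1 : (0:ℝ) ≤ x ^ p := Real.rpow_nonneg hx0.le p
  have h2 : Real.sin (x*t)^2 ≤ 1 := by
    nlinarith [Real.neg_one_le_sin (x*t), Real.sin_le_one (x*t)]
  have h3 : Real.exp (-2*c*x^2*t) = Real.exp (-(2*c*t)*x^2) := by ring_nf
  have h4 : (0:ℝ) < Real.exp (-(2*c*t)*x^2) := Real.exp_pos _
  rw [h3]
  nlinarith [mul_nonneg (mul_nonneg h1 h4.le) (sub_nonneg.mpr h2)]

set_option maxHeartbeats 2000000 in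
lemma profLower (p c t : ℝ) (hp : 0 ≤ p) (hc : 0 < c) (ht : 1 ≤ t) :
    Real.exp (-2*c*(1+2*π)^2) * (π - 1) * t ^ (-(p+1)/2)
      ≤ ∫ r in Ioi (0:ℝ), r ^ p * Real.sin (r * t) ^ 2 * Real.exp (-2 * c * r ^ 2 * t) := by
  have ht0 : (0:ℝ) < t := lt_of_lt_of_le one_pos ht
  obtain ⟨s, hs⟩ : ∃ s, s = t ^ ((1:ℝ)/2) := ⟨_, rfl⟩
  have hs0 : 0 < s := hs ▸ Real.rpow_pos_of_pos ht0 _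
  have hs1 : 1 ≤ s := hs ▸ Real.one_le_rpow ht (by norm_num)
  have hss : s * s = t := by rw [hs, ← Real.rpow_add ht0]; norm_num
  have hpi : (1:ℝ) < π := by linarith [Real.pi_gt_three]
  obtain ⟨α, hα⟩ : ∃ a, a = s⁻¹ := ⟨_, rfl⟩
  obtain ⟨β, hβ⟩ : ∃ b, b = (1 + 2*π) * s⁻¹ := ⟨_, rfl⟩
  have hα0 : 0 < α := by rw [hα]; positivity
  have hαβ : α ≤ β := by rw [hα, hβ]; nlinarith [inv_pos.mpr hs0]
  obtain ⟨E, hE⟩ : ∃ e, e = Real.exp (-2*c*(1+2*π)^2) := ⟨_, rfl⟩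
  have hE0 : 0 < E := hE ▸ Real.exp_pos _
  have step1 : (∫ r in Ioc α β, r ^ p * Real.sin (r * t) ^ 2 * Real.exp (-2 * c * r ^ 2 * t))
      ≤ ∫ r in Ioi (0:ℝ), r ^ p * Real.sin (r * t) ^ 2 * Real.exp (-2 * c * r ^ 2 * t) := by
    refine setIntegral_mono_set (profInt p c t hp hc ht0) ?_ ?_
    · filter_upwards [ae_restrict_mem measurableSet_Ioi] with x hx
      have hx0 : (0:ℝ) < x := hx
      have h1 : (0:ℝ) ≤ x ^ p := Real.rpow_nonneg hx0.le p
      simp only [Pi.zero_apply]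
      positivity
    · exact HasSubset.Subset.eventuallyLE fun x hx => mem_Ioi.mpr (hα0.trans hx.1)
  rw [← intervalIntegral.integral_of_le hαβ] at step1
  have step2 : (∫ r in α..β, (α ^ p * E) * Real.sin (r*t)^2)
      ≤ ∫ r in α..β, r ^ p * Real.sin (r * t) ^ 2 * Real.exp (-2 * c * r ^ 2 * t) := by
    refine intervalIntegral.integral_mono_on hαβ ?_ ?_ ?_
    · exact (continuous_const.mul
        ((Real.continuous_sin.comp (continuous_id.mul continuous_const)).pow 2)).intervalIntegrable _ _
    · exact ((profCont p t c hp).intervalIntegrable _ _)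
    · intro x hx
      have hx1 : α ≤ x := hx.1
      have hx2 : x ≤ β := hx.2
      have hx0 : 0 < x := lt_of_lt_of_le hα0 hx1
      have hap : α ^ p ≤ x ^ p := Real.rpow_le_rpow hα0.le hx1 hp
      have hb2 : β ^ 2 * t = (1+2*π)^2 := by
        have h1 : (s⁻¹)^2 * t = 1 := by
          rw [← hss]; field_simp
        rw [hβ, mul_pow]
        nlinarith [h1]
      have hx2t : x^2 * t ≤ (1+2*π)^2 := by
        rw [← hb2]
        exact mul_le_mul_of_nonneg_right (pow_le_pow_left₀ hx0.le hx2 2) ht0.le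
      have hexp : E ≤ Real.exp (-2*c*x^2*t) := by
        rw [hE]
        apply Real.exp_le_exp.mpr
        linarith [mul_le_mul_of_nonneg_left hx2t (by positivity : (0:ℝ) ≤ 2*c)]
      have hmain : α ^ p * E ≤ x ^ p * Real.exp (-2*c*x^2*t) :=
        mul_le_mul hap hexp hE0.le (Real.rpow_nonneg hx0.le p)
      have h := mul_le_mul_of_nonneg_right hmain (sq_nonneg (Real.sin (x*t)))
      nlinarith [h]
  have step3 : (∫ r in α..β, (α ^ p * E) * Real.sin (r*t)^2)
      = (α ^ p * E) * ∫ r in α..β, Real.sin (r*t)^2 :=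
    intervalIntegral.integral_const_mul _ _
  have step4 : (∫ r in α..β, Real.sin (r*t)^2) = t⁻¹ * ∫ u in (α*t)..(β*t), Real.sin u ^ 2 := by
    rw [intervalIntegral.integral_comp_mul_right (fun u => Real.sin u ^ 2) ht0.ne', smul_eq_mul]
  have hαt : α * t = s := by rw [hα, ← hss]; field_simp
  have hβt : β * t = (1+2*π) * s := by rw [hβ, ← hss]; field_simp
  have step5 : (π - 1) * s ≤ ∫ u in (α*t)..(β*t), Real.sin u ^ 2 := by
    rw [hαt, hβt, integral_sin_sq]
    have b1 := Real.sin_sq_add_cos_sq s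
    have b2 := Real.sin_sq_add_cos_sq ((1+2*π)*s)
    nlinarith [sq_nonneg (Real.sin s + Real.cos s), sq_nonneg (Real.sin s - Real.cos s),
      sq_nonneg (Real.sin ((1+2*π)*s) + Real.cos ((1+2*π)*s)),
      sq_nonneg (Real.sin ((1+2*π)*s) - Real.cos ((1+2*π)*s)), hs1]
  have hαp : α ^ p = (s ^ p)⁻¹ := by rw [hα, Real.inv_rpow hs0.le]
  have hexp2 : t ^ (-(p+1)/2) = (s ^ p * s)⁻¹ := by
    have h1 : -(p+1)/2 = (1/2) * (-(p+1)) := by ring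
    rw [h1, Real.rpow_mul ht0.le, ← hs, Real.rpow_neg hs0.le, Real.rpow_add hs0, Real.rpow_one]
  have hsp : 0 < s ^ p := Real.rpow_pos_of_pos hs0 _
  have hfinal : E * (π - 1) * t ^ (-(p+1)/2)
      ≤ (α ^ p * E) * (t⁻¹ * ∫ u in (α*t)..(β*t), Real.sin u ^ 2) := by
    have h1 : (α ^ p * E) * (t⁻¹ * ((π - 1) * s)) = E * (π - 1) * t ^ (-(p+1)/2) := by
      rw [hαp, hexp2, ← hss]
      field_simp
    rw [← h1]
    have h2 : 0 ≤ α ^ p * E := by positivity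
    have h3 : (t:ℝ)⁻¹ * ((π - 1) * s) ≤ t⁻¹ * ∫ u in (α*t)..(β*t), Real.sin u ^ 2 :=
      mul_le_mul_of_nonneg_left step5 (by positivity)
    exact mul_le_mul_of_nonneg_left h3 h2
  rw [← hE]
  calc E * (π - 1) * t ^ (-(p+1)/2)
      ≤ (α ^ p * E) * (t⁻¹ * ∫ u in (α*t)..(β*t), Real.sin u ^ 2) := hfinal
    _ = ∫ r in α..β, (α ^ p * E) * Real.sin (r*t)^2 := by rw [step3, step4]
    _ ≤ ∫ r in α..β, r ^ p * Real.sin (r * t) ^ 2 * Real.exp (-2 * c * r ^ 2 * t) := step2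
    _ ≤ _ := step1

set_option maxHeartbeats 2000000 in
theorem profile_two_sided_estimate_highdim (n : ℕ) (hn : 3 ≤ n) (c : ℝ) (hc : 0 < c) :
    ∃ C₁ C₂ : ℝ, 0 < C₁ ∧ 0 < C₂ ∧ ∀ t : ℝ, 1 ≤ t →
      C₁ * t ^ (-((n : ℝ) - 2) / 4)
        ≤ Real.sqrt (∫ r in Set.Ioi (0 : ℝ),
            r ^ ((n : ℝ) - 3) * Real.sin (r * t) ^ 2 * Real.exp (-2 * c * r ^ 2 * t)) ∧
      Real.sqrt (∫ r in Set.Ioi (0 : ℝ),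
            r ^ ((n : ℝ) - 3) * Real.sin (r * t) ^ 2 * Real.exp (-2 * c * r ^ 2 * t))
        ≤ C₂ * t ^ (-((n : ℝ) - 2) / 4) := by
  have hp : (0:ℝ) ≤ (n:ℝ) - 3 := by
    have h3 : (3:ℝ) ≤ (n:ℝ) := by exact_mod_cast hn
    linarith
  have hpi : (1:ℝ) < π := by linarith [Real.pi_gt_three]
  obtain ⟨G, hG⟩ : ∃ g, g = ∫ x in Ioi (0:ℝ), x ^ ((n:ℝ)-3) * Real.exp (-(2*c) * x^2) := ⟨_, rfl⟩
  have hG0 : 0 ≤ G := hG ▸ setIntegral_nonneg measurableSet_Ioi fun x hx =>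
    mul_nonneg (Real.rpow_nonneg (le_of_lt hx) _) (Real.exp_pos _).le
  obtain ⟨K, hK⟩ : ∃ k, k = Real.exp (-2*c*(1+2*π)^2) * (π - 1) := ⟨_, rfl⟩
  have hK0 : 0 < K := hK ▸ mul_pos (Real.exp_pos _) (by linarith)
  refine ⟨Real.sqrt K, Real.sqrt G + 1, Real.sqrt_pos.mpr hK0, by positivity, fun t htt => ?_⟩
  have ht0 : (0:ℝ) < t := lt_of_lt_of_le one_pos htt
  have heq : -(((n:ℝ)-3)+1)/2 = -((n:ℝ)-2)/2 := by ring
  have hsqrt_rpow : Real.sqrt (t ^ (-((n:ℝ)-2)/2)) = t ^ (-((n:ℝ)-2)/4) := by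
    rw [Real.sqrt_eq_rpow, ← Real.rpow_mul ht0.le]
    congr 1
    ring
  constructor
  · have hlow := profLower ((n:ℝ)-3) c t hp hc htt
    rw [heq, ← hK] at hlow
    have h1 := Real.sqrt_le_sqrt hlow
    rw [Real.sqrt_mul hK0.le, hsqrt_rpow] at h1
    exact h1
  · have hup := profUpper ((n:ℝ)-3) c t hp hc ht0
    rw [heq, ← hG] at hup
    have h1 := Real.sqrt_le_sqrt hup
    rw [Real.sqrt_mul hG0, hsqrt_rpow] at h1
    refine h1.trans ?_
    have h2 : (0:ℝ) < t ^ (-((n:ℝ)-2)/4) := Real.rpow_pos_of_pos ht0 _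
    linarith
end

section
/- Let c > 0. There exist constants C₁, C₂ > 0 such that for all t ≥ 1: C₁ t^{1/2} ≤ (∫₀^1 r^{−2}·sin²(rt)·e^{−2c r² t} dr)^{1/2} ≤ C₂ t^{1/2}. -/
/-!
Since `|sin x| ≤ |x|`, the integrand is at most `t²` on `(0, 1/t)`, and it is at most `r⁻²` on
`[1/t, 1)`, where `r⁻²` integrates to `t - 1`; so the integral is at most `2t`. On
`(1/(2t), 1/t)` we have `rt ∈ (1/2, 1)` and `r²t ≤ 1`, so the integrand is at least
`t² sin²(1/2) e^{-2c}` on an interval of length `1/(2t)`, giving a lower bound of order `t`.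
-/

open MeasureTheory Real Set

noncomputable def profileIntegrand (c t r : ℝ) : ℝ :=
  r ^ (-2 : ℝ) * sin (r * t) ^ 2 * exp (-2 * c * r ^ 2 * t)

lemma rpow_neg_two_eq_inv_sq (r : ℝ) : r ^ (-2 : ℝ) = (r ^ 2)⁻¹ := by
  simp [rpow_neg_ofNat]

lemma integral_rpow_neg_two {a b : ℝ} (ha : 0 < a) (hab : a ≤ b) :
    ∫ r in a..b, r ^ (-2 : ℝ) = a⁻¹ - b⁻¹ := by
  rw [integral_rpow (Or.inr ⟨by norm_num, notMem_uIcc_of_lt ha (ha.trans_le hab)⟩)]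
  norm_num [rpow_neg_one]
  ring

section
variable {c t : ℝ}

lemma measurable_profileIntegrand : Measurable (profileIntegrand c t) := by
  unfold profileIntegrand; fun_prop

lemma profileIntegrand_nonneg (r : ℝ) : 0 ≤ profileIntegrand c t r := by
  rw [profileIntegrand, rpow_neg_two_eq_inv_sq]; positivity

lemma profileIntegrand_le_rpow_mul_sin_sq (hc : 0 ≤ c) (ht : 0 ≤ t) (r : ℝ) :
    profileIntegrand c t r ≤ r ^ (-2 : ℝ) * sin (r * t) ^ 2 := by
  have : -2 * c * r ^ 2 * t ≤ 0 := by
    have := mul_nonneg (mul_nonneg hc (sq_nonneg r)) ht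
    linarith
  rw [profileIntegrand, rpow_neg_two_eq_inv_sq]
  exact mul_le_of_le_one_right (by positivity) (exp_le_one_iff.2 this)

lemma profileIntegrand_le_sq (hc : 0 ≤ c) (ht : 0 ≤ t) (r : ℝ) :
    profileIntegrand c t r ≤ t ^ 2 := by
  refine (profileIntegrand_le_rpow_mul_sin_sq hc ht r).trans ?_
  rcases eq_or_ne r 0 with rfl | hr
  · simp [sq_nonneg] -- `0 ^ (-2 : ℝ) = 0` in Lean
  calc r ^ (-2 : ℝ) * sin (r * t) ^ 2 ≤ (r ^ 2)⁻¹ * (r * t) ^ 2 := by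
        rw [rpow_neg_two_eq_inv_sq]; exact mul_le_mul_of_nonneg_left sin_sq_le_sq (by positivity)
    _ = t ^ 2 := by field_simp

lemma profileIntegrand_le_rpow_neg_two (hc : 0 ≤ c) (ht : 0 ≤ t) (r : ℝ) :
    profileIntegrand c t r ≤ r ^ (-2 : ℝ) := by
  refine (profileIntegrand_le_rpow_mul_sin_sq hc ht r).trans
    (mul_le_of_le_one_right ?_ (sin_sq_le_one _))
  rw [rpow_neg_two_eq_inv_sq]; positivity

lemma integrableOn_profileIntegrand (hc : 0 ≤ c) (ht : 0 ≤ t) {s : Set ℝ}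
    (hs : volume s ≠ ⊤) :
    IntegrableOn (profileIntegrand c t) s :=
  Measure.integrableOn_of_bounded hs measurable_profileIntegrand.aestronglyMeasurable
    (ae_of_all _ fun r => by
      rw [norm_of_nonneg (profileIntegrand_nonneg r)]; exact profileIntegrand_le_sq hc ht r)

lemma setIntegral_profileIntegrand_le_two_mul (hc : 0 ≤ c) (ht : 1 ≤ t) :
    ∫ r in Ioo 0 1, profileIntegrand c t r ≤ 2 * t := by
  have ht₀ : 0 < t := one_pos.trans_le ht
  have hinv_pos : 0 < t⁻¹ := inv_pos.2 ht₀
  have hinv_le : t⁻¹ ≤ 1 := inv_le_one_of_one_le₀ ht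
  have hnear : ∫ r in Ioo 0 t⁻¹, profileIntegrand c t r ≤ t :=
    calc ∫ r in Ioo 0 t⁻¹, profileIntegrand c t r
        ≤ ‖∫ r in Ioo 0 t⁻¹, profileIntegrand c t r‖ := le_norm_self _
      _ ≤ t ^ 2 * volume.real (Ioo 0 t⁻¹) :=
          norm_setIntegral_le_of_norm_le_const measure_Ioo_lt_top fun r _ => by
            rw [norm_of_nonneg (profileIntegrand_nonneg r)]
            exact profileIntegrand_le_sq hc ht₀.le r
      _ = t := by rw [volume_real_Ioo_of_le hinv_pos.le, sub_zero]; field_simp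
  have hrpow_int : IntegrableOn (fun r : ℝ => r ^ (-2 : ℝ)) (Ico t⁻¹ 1) :=
    ((integrableOn_Icc_iff_integrableOn_Ioc).2 (intervalIntegral.intervalIntegrable_rpow
      (Or.inr (notMem_uIcc_of_lt hinv_pos one_pos))).1).mono_set Ico_subset_Icc_self
  have hfar : ∫ r in Ico t⁻¹ 1, profileIntegrand c t r ≤ t - 1 :=
    calc ∫ r in Ico t⁻¹ 1, profileIntegrand c t r ≤ ∫ r in Ico t⁻¹ 1, r ^ (-2 : ℝ) :=
          setIntegral_mono_on (integrableOn_profileIntegrand hc ht₀.le measure_Ico_lt_top.ne)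
            hrpow_int measurableSet_Ico fun r _ => profileIntegrand_le_rpow_neg_two hc ht₀.le r
      _ = t - 1 := by
          rw [integral_Ico_eq_integral_Ioo, ← integral_Ioc_eq_integral_Ioo,
            ← intervalIntegral.integral_of_le hinv_le, integral_rpow_neg_two hinv_pos hinv_le,
            inv_inv, inv_one]
  rw [← Ioo_union_Ico_eq_Ioo hinv_pos hinv_le,
    setIntegral_union (Ico_disjoint_Ico_same.mono_left Ioo_subset_Ico_self) measurableSet_Ico
      (integrableOn_profileIntegrand hc ht₀.le measure_Ioo_lt_top.ne)
      (integrableOn_profileIntegrand hc ht₀.le measure_Ico_lt_top.ne)]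
  linarith

lemma le_profileIntegrand_of_mem_Ioo (hc : 0 ≤ c) (ht : 1 ≤ t) {r : ℝ}
    (hr : r ∈ Ioo (2 * t)⁻¹ t⁻¹) :
    t ^ 2 * sin (1 / 2) ^ 2 * exp (-2 * c) ≤ profileIntegrand c t r := by
  have ht₀ : 0 < t := one_pos.trans_le ht
  have hr₀ : 0 < r := (inv_pos.2 (by positivity)).trans hr.1
  have hrt_gt : 1 / 2 < r * t := by
    have := mul_lt_mul_of_pos_right hr.1 ht₀
    rwa [mul_inv, mul_assoc, inv_mul_cancel₀ ht₀.ne', mul_one, ← one_div] at this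
  have hrt_lt : r * t < 1 := by
    simpa [inv_mul_cancel₀ ht₀.ne'] using mul_lt_mul_of_pos_right hr.2 ht₀
  have hr_le : r ≤ 1 := hr.2.le.trans (inv_le_one_of_one_le₀ ht)
  have hsq : t ^ 2 ≤ (r ^ 2)⁻¹ := by
    rw [← one_div, le_div_iff₀ (by positivity)]
    nlinarith
  have hsin : sin (1 / 2) ≤ sin (r * t) :=
    sin_le_sin_of_le_of_le_pi_div_two (by linarith [pi_gt_three]) (by linarith [pi_gt_three])
      hrt_gt.le
  have hexp : -2 * c ≤ -2 * c * r ^ 2 * t := by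
    have : r ^ 2 * t ≤ 1 := by nlinarith
    nlinarith
  have hsin₀ : 0 ≤ sin (1 / 2) :=
    sin_nonneg_of_nonneg_of_le_pi (by norm_num) (by linarith [pi_gt_three])
  rw [profileIntegrand, rpow_neg_two_eq_inv_sq]
  gcongr

lemma mul_le_setIntegral_profileIntegrand (hc : 0 ≤ c) (ht : 1 ≤ t) :
    sin (1 / 2) ^ 2 * exp (-2 * c) / 2 * t ≤ ∫ r in Ioo 0 1, profileIntegrand c t r := by
  have ht₀ : 0 < t := one_pos.trans_le ht
  have hsub : Ioo (2 * t)⁻¹ t⁻¹ ⊆ Ioo 0 1 := fun r hr =>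
    ⟨(inv_pos.2 (by positivity)).trans hr.1, hr.2.trans_le (inv_le_one_of_one_le₀ ht)⟩
  calc sin (1 / 2) ^ 2 * exp (-2 * c) / 2 * t
      = t ^ 2 * sin (1 / 2) ^ 2 * exp (-2 * c) * volume.real (Ioo (2 * t)⁻¹ t⁻¹) := by
        rw [volume_real_Ioo_of_le (by gcongr; linarith)]
        field_simp
        ring
    _ ≤ ∫ r in Ioo (2 * t)⁻¹ t⁻¹, profileIntegrand c t r :=
        setIntegral_ge_of_const_le_real measurableSet_Ioo measure_Ioo_lt_top.ne
          (fun r hr => le_profileIntegrand_of_mem_Ioo hc ht hr)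
          (integrableOn_profileIntegrand hc ht₀.le measure_Ioo_lt_top.ne)
    _ ≤ ∫ r in Ioo 0 1, profileIntegrand c t r :=
        setIntegral_mono_set (integrableOn_profileIntegrand hc ht₀.le measure_Ioo_lt_top.ne)
          (ae_of_all _ profileIntegrand_nonneg) hsub.eventuallyLE

end

theorem profile_two_sided_estimate_1d (c : ℝ) (hc : 0 < c) :
    ∃ C₁ C₂ : ℝ, 0 < C₁ ∧ 0 < C₂ ∧ ∀ t : ℝ, 1 ≤ t →
      C₁ * t ^ ((1 : ℝ) / 2)
        ≤ Real.sqrt (∫ r in Set.Ioo (0 : ℝ) 1,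
            r ^ (-2 : ℝ) * Real.sin (r * t) ^ 2 * Real.exp (-2 * c * r ^ 2 * t)) ∧
      Real.sqrt (∫ r in Set.Ioo (0 : ℝ) 1,
            r ^ (-2 : ℝ) * Real.sin (r * t) ^ 2 * Real.exp (-2 * c * r ^ 2 * t))
        ≤ C₂ * t ^ ((1 : ℝ) / 2) := by
  have hsin : 0 < sin (1 / 2) := sin_pos_of_pos_of_lt_pi (by norm_num) (by linarith [pi_gt_three])
  refine ⟨√(sin (1 / 2) ^ 2 * exp (-2 * c) / 2), √2, by positivity, by positivity,
    fun t ht => ?_⟩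
  have ht₀ : 0 ≤ t := zero_le_one.trans ht
  rw [← sqrt_eq_rpow, ← sqrt_mul' _ ht₀, ← sqrt_mul' _ ht₀]
  exact ⟨sqrt_le_sqrt (mul_le_setIntegral_profileIntegrand hc.le ht),
    sqrt_le_sqrt (setIntegral_profileIntegrand_le_two_mul hc.le ht)⟩
end
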